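/- The Yellowstone sequence a is a permutation of the positive integers: the map n ↦ a(n) is a bijection from ℕ≥1 to ℕ≥1. -/

import Mathlib

/-!
Every value is new, so `a` is injective on `n ≥ 1` and tends to infinity. Hence a number `c` that
is admissible at step `n + 2` (not coprime to `a n`, coprime to `a (n + 1)`) for infinitely many
`n` is eventually taken: otherwise `a (n + 2) ≤ c` infinitely often.

If all late terms were odd, `2 ^ e * p`, with `p` the least prime factor of `a n` and `e` just
large enough to exceed the early values, would be admissible. Since the late `a n` cannot keep a
small least prime factor, this gives `a (n + 2) ≤ 2 * p` eventually, so `a (n + 2)` is a prime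
factor of `a n`; then `a (n + 4) = a (n + 2)`. So infinitely many terms are even, which makes a
large `2 ^ e * q` admissible infinitely often; hence every prime `q` divides infinitely many terms,
so `q` itself is admissible infinitely often and appears. Finally, if `k` never appears, then late
on a term sharing a factor with `k` is followed by another one; as `k.minFac` divides a late term,
every later term shares a factor with `k`, which fails where a prime `q > k` appears late.
-/

/-- The Yellowstone sequence: a 1 = 1, a 2 = 2, a 3 = 3, and for n ≥ 4,
`a n` is the least positive integer not among `a 1, …, a (n-1)` which shares
a common factor with `a (n-2)` and is coprime to `a (n-1)`. -/
def IsYellowstone (a : ℕ → ℕ) : Prop :=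
  a 1 = 1 ∧ a 2 = 2 ∧ a 3 = 3 ∧
  ∀ n, 4 ≤ n →
    IsLeast {k : ℕ | 0 < k ∧ (∀ m, 1 ≤ m → m < n → a m ≠ k) ∧
      1 < Nat.gcd k (a (n - 2)) ∧ Nat.gcd k (a (n - 1)) = 1} (a n)

open Filter

theorem Nat.one_lt_gcd_iff_not_coprime {m n : ℕ} (hm : 0 < m) : 1 < m.gcd n ↔ ¬ m.Coprime n := by
  have := Nat.gcd_pos_of_pos_left n hm
  rw [Nat.coprime_iff_gcd_eq_one]
  omega

theorem Nat.prime_and_dvd_of_le_two_mul_minFac {x y : ℕ} (hx : ¬ 2 ∣ x)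
    (hle : x ≤ 2 * y.minFac) (hxy : ¬ x.Coprime y) : x.Prime ∧ x ∣ y := by
  obtain ⟨q, hq, ⟨t, rfl⟩, hqy⟩ := Nat.Prime.not_coprime_iff_dvd.1 hxy
  have hmin : y.minFac ≤ q := Nat.minFac_le_of_dvd hq.two_le hqy
  obtain rfl : t = 1 := by
    rcases Nat.lt_or_ge t 2 with ht | ht
    · interval_cases t
      · simp at hx
      · rfl
    · have : q * 2 ≤ q * t := Nat.mul_le_mul_left q ht
      exact absurd ⟨y.minFac, by omega⟩ hx
  simpa using ⟨hq, hqy⟩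

theorem Nat.lt_two_pow_succ_mul {B p : ℕ} (hp : 0 < p) : B < 2 ^ (B + 1) * p :=
  calc B < 2 ^ (B + 1) := (Nat.lt_succ_self B).trans Nat.lt_two_pow_self
    _ ≤ 2 ^ (B + 1) * p := Nat.le_mul_of_pos_right _ hp

theorem exists_forall_le_apply_le (a : ℕ → ℕ) (M : ℕ) : ∃ B, ∀ j ≤ M, a j ≤ B := by
  obtain ⟨B, hB⟩ := ((Set.finite_Iic M).image a).bddAbove
  exact ⟨B, fun j hj => hB ⟨j, hj, rfl⟩⟩

namespace IsYellowstone

variable {a : ℕ → ℕ}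

theorem isLeast_add_two (ha : IsYellowstone a) {n : ℕ} (hn : 2 ≤ n) :
    IsLeast {k : ℕ | 0 < k ∧ (∀ m, 1 ≤ m → m < n + 2 → a m ≠ k) ∧
      1 < Nat.gcd k (a n) ∧ Nat.gcd k (a (n + 1)) = 1} (a (n + 2)) := by
  simpa using ha.2.2.2 (n + 2) (by omega)

theorem pos (ha : IsYellowstone a) {n : ℕ} (hn : 1 ≤ n) : 0 < a n := by
  rcases Nat.lt_or_ge n 4 with h | h
  · interval_cases n <;> simp [ha.1, ha.2.1, ha.2.2.1]
  · obtain ⟨m, rfl⟩ : ∃ m, n = m + 2 := ⟨n - 2, by omega⟩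
    exact (ha.isLeast_add_two (by omega)).1.1

theorem ne_of_lt (ha : IsYellowstone a) {m n : ℕ} (hm : 1 ≤ m) (hmn : m < n) : a m ≠ a n := by
  rcases Nat.lt_or_ge n 4 with h | h
  · interval_cases n <;> interval_cases m <;> simp [ha.1, ha.2.1, ha.2.2.1]
  · obtain ⟨n, rfl⟩ : ∃ m, n = m + 2 := ⟨n - 2, by omega⟩
    exact (ha.isLeast_add_two (by omega)).1.2.1 m hm hmn

theorem injOn (ha : IsYellowstone a) : Set.InjOn a {n | 1 ≤ n} := by
  intro m hm n hn h
  by_contra hne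
  rcases Nat.lt_or_gt_of_ne hne with hlt | hlt
  · exact ha.ne_of_lt hm hlt h
  · exact ha.ne_of_lt hn hlt h.symm

theorem ne_one (ha : IsYellowstone a) {n : ℕ} (hn : 2 ≤ n) : a n ≠ 1 :=
  fun h => ha.ne_of_lt le_rfl hn (ha.1.trans h.symm)

theorem tendsto_atTop (ha : IsYellowstone a) : Tendsto a atTop atTop := by
  have hinj : Function.Injective fun n => a (n + 1) := fun m n h => by
    simpa using ha.injOn (by simp) (by simp) h
  rw [← tendsto_add_atTop_iff_nat 1, ← Nat.cofinite_eq_atTop]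
  exact hinj.tendsto_cofinite

theorem coprime_succ (ha : IsYellowstone a) {n : ℕ} (hn : 2 ≤ n) :
    (a (n + 1)).Coprime (a n) := by
  rcases hn.eq_or_lt with rfl | hlt
  · rw [ha.2.1, ha.2.2.1]
    decide
  · obtain ⟨m, rfl⟩ : ∃ m, n = m + 1 := ⟨n - 1, by omega⟩
    exact (ha.isLeast_add_two (by omega)).1.2.2.2

theorem coprime_succ_of_dvd (ha : IsYellowstone a) {n p : ℕ} (hn : 2 ≤ n) (hp : p.Prime)
    (hpn : p ∣ a n) : p.Coprime (a (n + 1)) :=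
  (hp.coprime_iff_not_dvd).2 fun h => hp.one_lt.ne' <|
    Nat.eq_one_of_dvd_one (ha.coprime_succ hn ▸ Nat.dvd_gcd h hpn)

theorem not_coprime_add_two (ha : IsYellowstone a) {n : ℕ} (hn : 2 ≤ n) :
    ¬ (a (n + 2)).Coprime (a n) :=
  (Nat.one_lt_gcd_iff_not_coprime (ha.pos (by omega))).1 (ha.isLeast_add_two hn).1.2.2.1

theorem le_of_candidate (ha : IsYellowstone a) {n c : ℕ} (hn : 2 ≤ n) (hc : 0 < c)
    (hnew : ∀ m, 1 ≤ m → m < n + 2 → a m ≠ c) (hshare : ¬ c.Coprime (a n))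
    (hcop : c.Coprime (a (n + 1))) : a (n + 2) ≤ c :=
  (ha.isLeast_add_two hn).2 ⟨hc, hnew, (Nat.one_lt_gcd_iff_not_coprime hc).2 hshare, hcop⟩

theorem exists_eq_of_frequently_candidate (ha : IsYellowstone a) {c : ℕ} (hc : 0 < c)
    (h : ∃ᶠ n in atTop, ¬ c.Coprime (a n) ∧ c.Coprime (a (n + 1))) : ∃ m, 1 ≤ m ∧ a m = c := by
  by_contra hnew
  push Not at hnew
  have hlarge : ∀ᶠ n in atTop, c < a (n + 2) ∧ 2 ≤ n :=
    (((tendsto_add_atTop_iff_nat 2).2 ha.tendsto_atTop).eventually_gt_atTop c).and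
      (eventually_ge_atTop 2)
  obtain ⟨n, ⟨hshare, hcop⟩, hlt, hn⟩ := (h.and_eventually hlarge).exists
  exact absurd (ha.le_of_candidate hn hc (fun m hm _ => hnew m hm) hshare hcop) (not_le.2 hlt)

theorem add_two_le_of_forall_odd (ha : IsYellowstone a) {M B n e p : ℕ} (hM : 2 ≤ M)
    (hodd : ∀ m ≥ M, ¬ 2 ∣ a m) (hB : ∀ j ≤ M, a j ≤ B) (hn : M ≤ n) (he : e ≠ 0)
    (hp : p.Prime) (hpn : p ∣ a n) (hc : B < 2 ^ e * p) : a (n + 2) ≤ 2 ^ e * p := by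
  have htwo : 2 ∣ 2 ^ e * p := (dvd_pow_self 2 he).mul_right p
  refine ha.le_of_candidate (by omega) (Nat.mul_pos (by positivity) hp.pos)
    (fun m hm _ hmc => ?_) ?_ ?_
  · rcases le_or_gt m M with hmM | hmM
    · exact absurd (hB m hmM) (by omega)
    · exact hodd m hmM.le (hmc ▸ htwo)
  · exact Nat.Prime.not_coprime_iff_dvd.2 ⟨p, hp, dvd_mul_left p _, hpn⟩
  · refine Nat.Coprime.mul_left (Nat.Coprime.pow_left e ?_)
      (ha.coprime_succ_of_dvd (by omega) hp hpn)
    exact (Nat.prime_two.coprime_iff_not_dvd).2 (hodd _ (by omega))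

theorem frequently_even (ha : IsYellowstone a) : ∃ᶠ n in atTop, 2 ∣ a n := by
  by_contra h
  obtain ⟨M, hM, hodd⟩ : ∃ M, 2 ≤ M ∧ ∀ m ≥ M, ¬ 2 ∣ a m := by
    obtain ⟨M, hM⟩ := eventually_atTop.1 (not_frequently.1 h)
    exact ⟨M + 2, by omega, fun m hm => hM m (by omega)⟩
  obtain ⟨B, hB⟩ := exists_forall_le_apply_le a M
  have hminFac : ∀ n ≥ M, (a n).minFac.Prime := fun n hn =>
    Nat.minFac_prime (ha.ne_one (by omega))
  have hgrow : ∀ᶠ n in atTop, 2 ^ (B + 1) * B < a (n + 2) :=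
    ((tendsto_add_atTop_iff_nat 2).2 ha.tendsto_atTop).eventually_gt_atTop _
  have hlarge : ∀ᶠ n in atTop, B < (a n).minFac := by
    filter_upwards [hgrow, eventually_ge_atTop M] with n hn hnM
    by_contra! hsmall
    have hp := hminFac n hnM
    have hle := ha.add_two_le_of_forall_odd hM hodd hB hnM (Nat.add_one_ne_zero B) hp
      (Nat.minFac_dvd _) (Nat.lt_two_pow_succ_mul hp.pos)
    have := Nat.mul_le_mul_left (2 ^ (B + 1)) hsmall
    omega
  have hprime : ∀ᶠ n in atTop, (a (n + 2)).Prime ∧ a (n + 2) ∣ a n := by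
    filter_upwards [hlarge, eventually_ge_atTop M] with n hn hnM
    refine Nat.prime_and_dvd_of_le_two_mul_minFac (hodd _ (by omega)) ?_
      (ha.not_coprime_add_two (by omega))
    simpa using ha.add_two_le_of_forall_odd hM hodd hB hnM one_ne_zero (hminFac n hnM)
      (Nat.minFac_dvd _) (by omega)
  obtain ⟨N, hN⟩ := eventually_atTop.1 (hprime.and (eventually_ge_atTop 1))
  obtain ⟨⟨hp, -⟩, hN1⟩ := hN N le_rfl
  obtain ⟨⟨hq, hdvd⟩, -⟩ := hN (N + 2) (by omega)
  exact ha.ne_of_lt (by omega) (by omega) ((Nat.prime_dvd_prime_iff_eq hq hp).1 hdvd).symm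

theorem frequently_prime_dvd (ha : IsYellowstone a) {q : ℕ} (hq : q.Prime) :
    ∃ᶠ n in atTop, q ∣ a n := by
  by_contra h
  obtain ⟨M, hM, hndvd⟩ : ∃ M, 2 ≤ M ∧ ∀ m ≥ M, ¬ q ∣ a m := by
    obtain ⟨M, hM⟩ := eventually_atTop.1 (not_frequently.1 h)
    exact ⟨M + 2, by omega, fun m hm => hM m (by omega)⟩
  obtain ⟨B, hB⟩ := exists_forall_le_apply_le a M
  have hc0 : 0 < 2 ^ (B + 1) * q := Nat.mul_pos (by positivity) hq.pos
  have hcand : ∃ᶠ n in atTop,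
      ¬ (2 ^ (B + 1) * q).Coprime (a n) ∧ (2 ^ (B + 1) * q).Coprime (a (n + 1)) := by
    refine (ha.frequently_even.and_eventually (eventually_ge_atTop M)).mono
      fun n ⟨heven, hn⟩ => ⟨?_, ?_⟩
    · exact Nat.Prime.not_coprime_iff_dvd.2
        ⟨2, Nat.prime_two, (dvd_pow_self 2 (Nat.add_one_ne_zero B)).mul_right q, heven⟩
    · exact Nat.Coprime.mul_left
        (Nat.Coprime.pow_left _ (ha.coprime_succ_of_dvd (by omega) Nat.prime_two heven))
        ((hq.coprime_iff_not_dvd).2 (hndvd _ (by omega)))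
  obtain ⟨m, -, hmc⟩ := ha.exists_eq_of_frequently_candidate hc0 hcand
  have hmM : M < m := by
    by_contra! hmM
    have := hB m hmM
    have := Nat.lt_two_pow_succ_mul (B := B) hq.pos
    omega
  exact hndvd m hmM.le (hmc ▸ dvd_mul_left q _)

theorem exists_eq_of_prime (ha : IsYellowstone a) {q : ℕ} (hq : q.Prime) :
    ∃ m, 1 ≤ m ∧ a m = q :=
  ha.exists_eq_of_frequently_candidate hq.pos <|
    ((ha.frequently_prime_dvd hq).and_eventually (eventually_ge_atTop 2)).mono
      fun _ ⟨hqn, hn⟩ =>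
        ⟨Nat.Prime.not_coprime_iff_dvd.2 ⟨q, hq, dvd_rfl, hqn⟩, ha.coprime_succ_of_dvd hn hq hqn⟩

theorem exists_eq (ha : IsYellowstone a) {k : ℕ} (hk : 1 ≤ k) : ∃ m, 1 ≤ m ∧ a m = k := by
  by_contra hmiss
  have hk1 : k ≠ 1 := fun h => hmiss ⟨1, le_rfl, ha.1.trans h.symm⟩
  -- a missing `k` is never admissible late, so sharing a factor with `k` propagates forward
  obtain ⟨N, hstep⟩ : ∃ N, ∀ n ≥ N, ¬ k.Coprime (a n) → ¬ k.Coprime (a (n + 1)) := by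
    obtain ⟨N, hN⟩ := eventually_atTop.1
      (not_frequently.1 (mt (ha.exists_eq_of_frequently_candidate hk) hmiss))
    exact ⟨N, fun n hn hshare hcop => hN n hn ⟨hshare, hcop⟩⟩
  have hp : k.minFac.Prime := Nat.minFac_prime hk1
  obtain ⟨m₀, hdvd, hm₀⟩ :=
    ((ha.frequently_prime_dvd hp).and_eventually (eventually_ge_atTop N)).exists
  have hshare : ∀ n ≥ m₀, ¬ k.Coprime (a n) := by
    intro n hn
    induction n, hn using Nat.le_induction with
    | base => exact Nat.Prime.not_coprime_iff_dvd.2 ⟨k.minFac, hp, Nat.minFac_dvd k, hdvd⟩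
    | succ n hn ih => exact hstep n (by omega) ih
  obtain ⟨B, hB⟩ := exists_forall_le_apply_le a m₀
  obtain ⟨q, hqB, hq⟩ := Nat.exists_infinite_primes (max k B + 1)
  obtain ⟨j, -, rfl⟩ := ha.exists_eq_of_prime hq
  have hj : m₀ ≤ j := by
    by_contra! hj
    have := hB j hj.le
    omega
  refine hshare j hj (Nat.Coprime.symm ((hq.coprime_iff_not_dvd).2 fun h => ?_))
  have := Nat.le_of_dvd (by omega) h
  omega

end IsYellowstone

theorem yellowstone_is_permutation (a : ℕ → ℕ) (ha : IsYellowstone a) :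
    Set.BijOn a {n : ℕ | 1 ≤ n} {k : ℕ | 1 ≤ k} :=
  ⟨fun _ hn => ha.pos hn, ha.injOn, fun _ hk => ha.exists_eq hk⟩
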